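/- Assume s_h < 2 (equivalently pν < 1) and set α = 1 − s_h/2 ∈ (0,1) and c₀ = p(ν−1)/(pν−1). Then there exist a positive function u : ℝ → ℝ with period 1 and a constant C > 0 such that for every x ∈ X and every λ ∈ (0,1), |R_λ(x,x) − λ^{−α} u(ln λ / ln p) − c₀| ≤ C λ. -/

import Mathlib

noncomputable section
open scoped ENNReal

def HX (ν : ℕ) : Type := {x : ℕ → Fin ν // ∃ N, ∀ n, N ≤ n → (x n : ℕ) = 0}
instance (ν : ℕ) : DecidableEq (HX ν) := Classical.decEq _
abbrev Hl2 (ν : ℕ) : Type := lp (fun _ : HX ν => ℝ) 2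
def cube (ν : ℕ) (r : ℕ) (x : HX ν) : Set (HX ν) := {y | ∀ n, r ≤ n → y.1 n = x.1 n}
def hdelta (ν : ℕ) (x : HX ν) : Hl2 ν := lp.single 2 x 1
def cubeSum (ν r : ℕ) (x : HX ν) (ψ : Hl2 ν) : ℝ := ∑' y : cube ν r x, ψ y
def IsHierLap (ν : ℕ) (p : ℝ) (Δ : Hl2 ν →L[ℝ] Hl2 ν) : Prop :=
  ∀ ψ x, Δ ψ x = ∑' r : ℕ,
    (1 - p) * p ^ r * (((ν : ℝ) ^ (r + 1))⁻¹ * cubeSum ν (r + 1) x ψ - ψ x)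
/-- Spectral dimension `s_h = 2 ln ν / ln(1/p)`. -/
def sh (ν : ℕ) (p : ℝ) : ℝ := 2 * Real.log ν / Real.log (1 / p)
/-- Resolvent kernel `R_λ(x,y) = ⟨(λI − Δ_h)⁻¹ δ_y, δ_x⟩`. -/
def resolvK (ν : ℕ) (Δ : Hl2 ν →L[ℝ] Hl2 ν) (lam : ℝ) (x y : HX ν) : ℝ :=
  @inner ℝ _ _ (Ring.inverse (lam • (1 : Hl2 ν →L[ℝ] Hl2 ν) - Δ) (hdelta ν y)) (hdelta ν x)

/-!
The averaging operators `P_r` over cubes of rank `r` are contractions of `ℓ²(X)`, and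
`Δ_h = Σ a_r (P_r - 1)` with `Σ a_r = 1`; hence `‖1 + Δ_h‖ ≤ 1` and `λ - Δ_h` is invertible for
`λ > 0`. Spectrally, `Δ_h = -p^j` on the range of `P_j - P_{j+1}`, and the component of `δ_x`
in that range has squared norm `(1 - 1/ν) ν^{-j}`, so
`R_λ(x, x) = Σ_{j ≥ 0} (1 - 1/ν) ν^{-j} (λ + p^j)⁻¹`. Rather than building this decomposition,
we write down the Green function `R_λ(x, ·)`, which depends only on the hierarchical distance to
`x`, and check `(λ - Δ_h) g = δ_x` by summing over cubes.

Extending the sum to all `j ∈ ℤ` gives `G(λ)` with `G(p λ) = (ν p)⁻¹ G(λ)`. As `p^α = ν p`, the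
function `u(z) = (p^z)^α G(p^z)` has period `1`, and `λ^{-α} u(log λ / log p) = G(λ)`. The levels
`j < 0` contribute `Σ_{n ≥ 1} (1 - 1/ν) (ν p)^n / (1 + λ p^n)`, which is `-c₀` up to `O(λ)`
because `ν p² < 1`.
-/

open Filter Topology

namespace Hierarchical

section Series

variable {p : ℝ}

theorem hasSum_one_sub_mul_pow (hp0 : 0 ≤ p) (hp1 : p < 1) :
    HasSum (fun r : ℕ => (1 - p) * p ^ r) 1 := by
  have := (hasSum_geometric_of_lt_one hp0 hp1).mul_left (1 - p)
  rwa [mul_inv_cancel₀ (sub_ne_zero.2 hp1.ne')] at this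

theorem one_sub_mul_pow_nonneg (hp0 : 0 ≤ p) (hp1 : p < 1) (r : ℕ) : 0 ≤ (1 - p) * p ^ r :=
  mul_nonneg (sub_nonneg.2 hp1.le) (pow_nonneg hp0 r)

theorem hasSum_mul_geometric_succ (c : ℝ) {q : ℝ} (h0 : 0 ≤ q) (h1 : q < 1) :
    HasSum (fun n : ℕ => c * q ^ (n + 1)) (c * q / (1 - q)) := by
  have := (hasSum_geometric_of_lt_one h0 h1).mul_left (c * q)
  rw [← div_eq_mul_inv] at this
  rwa [show (fun n : ℕ => c * q ^ (n + 1)) = fun n : ℕ => c * q * q ^ n from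
    funext fun n => by ring]

theorem hasSum_sub_succ_of_antitone {f : ℕ → ℝ} {l : ℝ} (hf : Antitone f)
    (h : Tendsto f atTop (𝓝 l)) : HasSum (fun n => f n - f (n + 1)) (f 0 - l) := by
  refine (hasSum_iff_tendsto_nat_of_nonneg (fun n => sub_nonneg.2 (hf n.le_succ)) _).2 ?_
  simp only [Finset.sum_range_sub']
  exact h.const_sub (f 0)

end Series

section L2

variable {α : Type*}

theorem sum_norm_rpow_two (f : α → ℝ) (s : Finset α) :
    ∑ i ∈ s, ‖f i‖ ^ (2 : ℝ≥0∞).toReal = ∑ i ∈ s, f i ^ 2 := by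
  simp only [ENNReal.toReal_ofNat, Real.rpow_two, Real.norm_eq_abs, sq_abs]

theorem sum_sq_le_norm_sq (f : lp (fun _ : α => ℝ) 2) (s : Finset α) :
    ∑ i ∈ s, f i ^ 2 ≤ ‖f‖ ^ 2 := by
  have := lp.sum_rpow_le_norm_rpow (by norm_num) f s
  rwa [sum_norm_rpow_two, ENNReal.toReal_ofNat, Real.rpow_two] at this

theorem memℓp_two_of_sum_sq_le {f : α → ℝ} {C : ℝ}
    (h : ∀ s : Finset α, ∑ i ∈ s, f i ^ 2 ≤ C) : Memℓp f 2 :=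
  memℓp_gen' fun s => (sum_norm_rpow_two f s).trans_le (h s)

theorem norm_le_of_forall_sum_sq_le {f : lp (fun _ : α => ℝ) 2} {C : ℝ} (hC : 0 ≤ C)
    (h : ∀ s : Finset α, ∑ i ∈ s, f i ^ 2 ≤ C ^ 2) : ‖f‖ ≤ C :=
  lp.norm_le_of_forall_sum_le (by norm_num) hC fun s => by
    rw [sum_norm_rpow_two, ENNReal.toReal_ofNat, Real.rpow_two]
    exact h s

end L2

section Cubes

variable {ν : ℕ}

theorem cube_mono {r s : ℕ} (h : r ≤ s) (x : HX ν) : cube ν r x ⊆ cube ν s x :=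
  fun _ hy n hn => hy n (h.trans hn)

theorem cube_eq_of_mem {r : ℕ} {x y : HX ν} (h : y ∈ cube ν r x) :
    cube ν r y = cube ν r x := by
  ext z
  exact ⟨fun hz n hn => (hz n hn).trans (h n hn), fun hz n hn => (hz n hn).trans (h n hn).symm⟩

theorem cube_zero (x : HX ν) : cube ν 0 x = {x} := by
  ext z
  exact ⟨fun h => Subtype.ext (funext fun n => h n n.zero_le), fun h _ _ => by rw [h]⟩

theorem exists_mem_cube (x y : HX ν) : ∃ r, y ∈ cube ν r x := by
  obtain ⟨N, hN⟩ := x.2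
  obtain ⟨M, hM⟩ := y.2
  exact ⟨max N M, fun n hn => Fin.val_injective <|
    (hM n (le_of_max_le_right hn)).trans (hN n (le_of_max_le_left hn)).symm⟩

def hdist (x y : HX ν) : ℕ := sInf {r | y ∈ cube ν r x}

theorem mem_cube_iff_hdist_le {r : ℕ} {x y : HX ν} : y ∈ cube ν r x ↔ hdist x y ≤ r :=
  ⟨fun h => Nat.sInf_le h, fun h => cube_mono h x (Nat.sInf_mem (exists_mem_cube x y))⟩

theorem hdist_eq_zero_iff {x y : HX ν} : hdist x y = 0 ↔ y = x := by
  rw [← Nat.le_zero, ← mem_cube_iff_hdist_le, cube_zero, Set.mem_singleton_iff]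

@[simp]
theorem hdist_self (x : HX ν) : hdist x x = 0 :=
  hdist_eq_zero_iff.2 rfl

theorem mem_cube_congr {r : ℕ} {x y z : HX ν} (hz : z ∈ cube ν r y) :
    z ∈ cube ν r x ↔ y ∈ cube ν r x :=
  forall₂_congr fun n hn => by rw [hz n hn]

theorem hdist_eq_of_mem_cube {s : ℕ} {x y z : HX ν} (hs : s < hdist x y)
    (hz : z ∈ cube ν s y) : hdist x z = hdist x y := by
  refine eq_of_forall_ge_iff fun r => ?_
  rw [← mem_cube_iff_hdist_le, ← mem_cube_iff_hdist_le]
  rcases le_or_gt s r with hsr | hrs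
  · exact mem_cube_congr (cube_mono hsr y hz)
  · have hy : y ∉ cube ν s x := fun h => (mem_cube_iff_hdist_le.1 h).not_gt hs
    exact iff_of_false (fun h => hy ((mem_cube_congr hz).1 (cube_mono hrs.le x h)))
      (fun h => hy (cube_mono hrs.le x h))

def cubeEquiv (r : ℕ) (x : HX ν) : cube ν r x ≃ (Fin r → Fin ν) where
  toFun y i := y.1.1 i
  invFun a := ⟨⟨fun n => if h : n < r then a ⟨n, h⟩ else x.1 n, by
      obtain ⟨N, hN⟩ := x.2
      exact ⟨max N r, fun n hn => by
        simp only [dif_neg (show ¬n < r by omega)]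
        exact hN n (le_of_max_le_left hn)⟩⟩,
    fun n hn => dif_neg (by omega)⟩
  left_inv y := by
    refine Subtype.ext (Subtype.ext (funext fun n => ?_))
    dsimp only
    split_ifs with h
    · rfl
    · exact (y.2 n (by omega)).symm
  right_inv a := funext fun i => by simp [i.2]

instance (r : ℕ) (x : HX ν) : Fintype (cube ν r x) :=
  Fintype.ofEquiv _ (cubeEquiv r x).symm

theorem card_toFinset_cube (r : ℕ) (x : HX ν) : (cube ν r x).toFinset.card = ν ^ r := by
  rw [Set.toFinset_card, Fintype.card_congr (cubeEquiv r x), Fintype.card_fun,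
    Fintype.card_fin, Fintype.card_fin]

theorem cubeSum_eq_of_mem {r : ℕ} {x y : HX ν} (h : y ∈ cube ν r x) (ψ : Hl2 ν) :
    cubeSum ν r y ψ = cubeSum ν r x ψ := by
  rw [cubeSum, cubeSum, cube_eq_of_mem h]

theorem cubeSum_eq_sum (r : ℕ) (x : HX ν) (ψ : Hl2 ν) :
    cubeSum ν r x ψ = ∑ y ∈ (cube ν r x).toFinset, ψ y := by
  rw [cubeSum, tsum_fintype, Finset.sum_set_coe]

theorem sum_cube_succ_radial (x : HX ν) (F : ℕ → ℝ) (s : ℕ) :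
    ∑ z ∈ (cube ν (s + 1) x).toFinset, F (hdist x z)
      = ∑ z ∈ (cube ν s x).toFinset, F (hdist x z)
        + ((ν : ℝ) ^ (s + 1) - ν ^ s) * F (s + 1) := by
  have hsub : (cube ν s x).toFinset ⊆ (cube ν (s + 1) x).toFinset :=
    Set.toFinset_subset_toFinset.2 (cube_mono s.le_succ x)
  have hshell : ∀ z ∈ (cube ν (s + 1) x).toFinset \ (cube ν s x).toFinset,
      F (hdist x z) = F (s + 1) := by
    intro z hz
    simp only [Finset.mem_sdiff, Set.mem_toFinset, mem_cube_iff_hdist_le] at hz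
    rw [show hdist x z = s + 1 by omega]
  rw [← Finset.sum_sdiff hsub, Finset.sum_congr rfl hshell, Finset.sum_const,
    Finset.card_sdiff_of_subset hsub, nsmul_eq_mul, Nat.cast_sub (Finset.card_le_card hsub),
    card_toFinset_cube, card_toFinset_cube]
  push_cast
  ring

theorem sum_cube_of_lt_hdist {s : ℕ} {x y : HX ν} (hs : s < hdist x y) (F : ℕ → ℝ) :
    ∑ z ∈ (cube ν s y).toFinset, F (hdist x z) = (ν : ℝ) ^ s * F (hdist x y) := by
  rw [Finset.sum_congr rfl fun z hz => by rw [hdist_eq_of_mem_cube hs (Set.mem_toFinset.1 hz)],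
    Finset.sum_const, card_toFinset_cube, nsmul_eq_mul, Nat.cast_pow]

end Cubes

section Averaging

variable {ν : ℕ}

def cubeAvg (r : ℕ) (ψ : Hl2 ν) (y : HX ν) : ℝ := ((ν : ℝ) ^ r)⁻¹ * cubeSum ν r y ψ

theorem cubeAvg_eq_of_mem {r : ℕ} {y z : HX ν} (h : z ∈ cube ν r y) (ψ : Hl2 ν) :
    cubeAvg r ψ z = cubeAvg r ψ y := by
  rw [cubeAvg, cubeAvg, cubeSum_eq_of_mem h]

variable [NeZero ν]

def cubeBase (r : ℕ) (x : HX ν) : HX ν :=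
  ⟨fun n => if n < r then 0 else x.1 n, by
    obtain ⟨N, hN⟩ := x.2
    exact ⟨max N r, fun n hn => by
      simp only [if_neg (show ¬n < r by omega)]
      exact hN n (le_of_max_le_left hn)⟩⟩

theorem cubeBase_eq_cubeBase_iff {r : ℕ} {x y : HX ν} :
    cubeBase r y = cubeBase r x ↔ y ∈ cube ν r x := by
  refine ⟨fun h n hn => ?_, fun h => Subtype.ext (funext fun n => ?_)⟩
  · simpa [cubeBase, if_neg (show ¬n < r by omega)] using congrArg (fun w => w.1 n) h
  · by_cases hn : n < r
    · simp [cubeBase, hn]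
    · simp [cubeBase, hn, h n (by omega)]

theorem sum_cube_sq_cubeAvg_le (r : ℕ) (ψ : Hl2 ν) (y : HX ν) :
    ∑ z ∈ (cube ν r y).toFinset, cubeAvg r ψ z ^ 2
      ≤ ∑ z ∈ (cube ν r y).toFinset, ψ z ^ 2 := by
  have hν : (0 : ℝ) < (ν : ℝ) ^ r := pow_pos (Nat.cast_pos.2 (NeZero.pos ν)) r
  have hCS := sq_sum_le_card_mul_sum_sq (s := (cube ν r y).toFinset) (f := fun z => ψ z)
  rw [card_toFinset_cube, Nat.cast_pow] at hCS
  rw [Finset.sum_congr rfl fun z hz => by rw [cubeAvg_eq_of_mem (Set.mem_toFinset.1 hz)],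
    Finset.sum_const, card_toFinset_cube, nsmul_eq_mul, cubeAvg, cubeSum_eq_sum, Nat.cast_pow]
  calc (ν : ℝ) ^ r * (((ν : ℝ) ^ r)⁻¹ * ∑ z ∈ (cube ν r y).toFinset, ψ z) ^ 2
      = (∑ z ∈ (cube ν r y).toFinset, ψ z) ^ 2 / (ν : ℝ) ^ r := by field_simp
    _ ≤ _ := (div_le_iff₀' hν).2 hCS

theorem sum_sq_cubeAvg_le (r : ℕ) (ψ : Hl2 ν) (s : Finset (HX ν)) :
    ∑ z ∈ s, cubeAvg r ψ z ^ 2 ≤ ‖ψ‖ ^ 2 := by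
  set B := s.biUnion fun z => (cube ν r z).toFinset
  have hfiber (z₀ : HX ν) (hz₀ : z₀ ∈ B) :
      {z ∈ B | cubeBase r z = cubeBase r z₀} = (cube ν r z₀).toFinset := by
    obtain ⟨z₁, hz₁, hz₀₁⟩ := Finset.mem_biUnion.1 hz₀
    ext z
    simp only [Finset.mem_filter, Set.mem_toFinset, cubeBase_eq_cubeBase_iff, B,
      Finset.mem_biUnion]
    refine ⟨And.right, fun hz => ⟨⟨z₁, hz₁, ?_⟩, hz⟩⟩
    rw [← cube_eq_of_mem (Set.mem_toFinset.1 hz₀₁)]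
    exact hz
  have hmaps : ∀ z ∈ B, cubeBase r z ∈ B.image (cubeBase r) := fun z hz =>
    Finset.mem_image_of_mem _ hz
  calc ∑ z ∈ s, cubeAvg r ψ z ^ 2 ≤ ∑ z ∈ B, cubeAvg r ψ z ^ 2 :=
        Finset.sum_le_sum_of_subset_of_nonneg
          (fun z hz => Finset.mem_biUnion.2 ⟨z, hz, Set.mem_toFinset.2 fun _ _ => rfl⟩)
          fun _ _ _ => sq_nonneg _
    _ = ∑ w ∈ B.image (cubeBase r), ∑ z ∈ B with cubeBase r z = w, cubeAvg r ψ z ^ 2 :=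
        (Finset.sum_fiberwise_of_maps_to hmaps _).symm
    _ ≤ ∑ w ∈ B.image (cubeBase r), ∑ z ∈ B with cubeBase r z = w, ψ z ^ 2 := by
        refine Finset.sum_le_sum fun w hw => ?_
        obtain ⟨z₀, hz₀, rfl⟩ := Finset.mem_image.1 hw
        rw [hfiber z₀ hz₀]
        exact sum_cube_sq_cubeAvg_le r ψ z₀
    _ = ∑ z ∈ B, ψ z ^ 2 := Finset.sum_fiberwise_of_maps_to hmaps _
    _ ≤ ‖ψ‖ ^ 2 := sum_sq_le_norm_sq ψ B

def cubeAvgLp (r : ℕ) (ψ : Hl2 ν) : Hl2 ν :=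
  ⟨cubeAvg r ψ, memℓp_two_of_sum_sq_le (sum_sq_cubeAvg_le r ψ)⟩

theorem cubeAvgLp_apply (r : ℕ) (ψ : Hl2 ν) (y : HX ν) : cubeAvgLp r ψ y = cubeAvg r ψ y :=
  rfl

theorem norm_cubeAvgLp_le (r : ℕ) (ψ : Hl2 ν) : ‖cubeAvgLp r ψ‖ ≤ ‖ψ‖ :=
  norm_le_of_forall_sum_sq_le (norm_nonneg ψ) (sum_sq_cubeAvg_le r ψ)

end Averaging

section Operator

variable {ν : ℕ} [NeZero ν] {p : ℝ}

theorem norm_smul_cubeAvgLp_le {c : ℝ} (hc : 0 ≤ c) (r : ℕ) (ψ : Hl2 ν) :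
    ‖c • cubeAvgLp r ψ‖ ≤ c * ‖ψ‖ := by
  rw [norm_smul, Real.norm_of_nonneg hc]
  exact mul_le_mul_of_nonneg_left (norm_cubeAvgLp_le r ψ) hc

theorem hasSum_add_hierLap (hp0 : 0 ≤ p) (hp1 : p < 1) {Δ : Hl2 ν →L[ℝ] Hl2 ν}
    (hΔ : IsHierLap ν p Δ) (ψ : Hl2 ν) :
    HasSum (fun r : ℕ => ((1 - p) * p ^ r) • cubeAvgLp (r + 1) ψ) (ψ + Δ ψ) := by
  have hweight := hasSum_one_sub_mul_pow hp0 hp1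
  have hsum : Summable fun r : ℕ => ((1 - p) * p ^ r) • cubeAvgLp (r + 1) ψ :=
    Summable.of_norm_bounded (hweight.summable.mul_right ‖ψ‖)
      fun r => norm_smul_cubeAvgLp_le (one_sub_mul_pow_nonneg hp0 hp1 r) _ ψ
  convert hsum.hasSum
  refine lp.ext (funext fun y => ?_)
  have hy := (hsum.hasSum.mapL (lp.evalCLM ℝ (fun _ : HX ν => ℝ) 2 y)).sub
    (hweight.mul_right (ψ y))
  simp only [map_smul, lp.evalCLM, LinearMap.mkContinuous_apply, lp.evalₗ_apply,
    cubeAvgLp_apply, smul_eq_mul, one_mul, cubeAvg, ← mul_sub] at hy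
  rw [lp.coeFn_add, Pi.add_apply, hΔ ψ y, hy.tsum_eq, add_sub_cancel]

theorem norm_one_add_hierLap_le (hp0 : 0 ≤ p) (hp1 : p < 1) {Δ : Hl2 ν →L[ℝ] Hl2 ν}
    (hΔ : IsHierLap ν p Δ) : ‖1 + Δ‖ ≤ 1 := by
  refine ContinuousLinearMap.opNorm_le_bound _ zero_le_one fun ψ => ?_
  have hbound := (hasSum_one_sub_mul_pow hp0 hp1).mul_right ‖ψ‖
  rw [one_mul] at hbound ⊢
  change ‖ψ + Δ ψ‖ ≤ ‖ψ‖
  rw [← (hasSum_add_hierLap hp0 hp1 hΔ ψ).tsum_eq]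
  exact tsum_of_norm_bounded hbound fun r =>
    norm_smul_cubeAvgLp_le (one_sub_mul_pow_nonneg hp0 hp1 r) _ ψ

theorem isUnit_smul_one_sub_hierLap (hp0 : 0 ≤ p) (hp1 : p < 1) {Δ : Hl2 ν →L[ℝ] Hl2 ν}
    (hΔ : IsHierLap ν p Δ) {lam : ℝ} (hlam : 0 < lam) :
    IsUnit (lam • (1 : Hl2 ν →L[ℝ] Hl2 ν) - Δ) := by
  have hres : (1 + lam) ∈ resolventSet ℝ (1 + Δ) := by
    refine spectrum.mem_resolventSet_of_norm_lt_mul ?_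
    calc ‖1 + Δ‖ * ‖(1 : Hl2 ν →L[ℝ] Hl2 ν)‖ ≤ 1 * 1 :=
          mul_le_mul (norm_one_add_hierLap_le hp0 hp1 hΔ) ContinuousLinearMap.norm_id_le
            (norm_nonneg _) zero_le_one
      _ < ‖1 + lam‖ := by rw [Real.norm_of_nonneg (by linarith)]; linarith
  rw [spectrum.mem_resolventSet_iff, Algebra.algebraMap_eq_smul_one, add_smul, one_smul] at hres
  convert hres using 1
  abel

end Operator

section Profile

variable (ν : ℕ) (p lam : ℝ)

def levelWeight (j : ℕ) : ℝ :=
  (1 - (ν : ℝ)⁻¹) * ((ν : ℝ) ^ j)⁻¹ * (lam + p ^ j)⁻¹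

def tailSum (d : ℕ) : ℝ := ∑' k : ℕ, levelWeight ν p lam (k + d)

/-- `R_λ(x, y) = Σ_j (λ + p^j)⁻¹ ((P_j - P_{j+1}) δ_x)(y)` with `(P_j δ_x)(y) = ν^{-j}` when
`hdist x y ≤ j` and `0` otherwise; this is that sum at `hdist x y = d`. -/
def greenProfile : ℕ → ℝ
  | 0 => tailSum ν p lam 0
  | d + 1 => tailSum ν p lam (d + 1) - ((ν : ℝ) ^ (d + 1))⁻¹ * (lam + p ^ d)⁻¹

def tailMoment (s : ℕ) : ℝ :=
  (lam + p ^ s) * tailSum ν p lam (s + 1) - ((ν : ℝ) ^ (s + 1))⁻¹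

variable {ν p lam}

theorem one_sub_inv_pos (hν : 1 < ν) : 0 < 1 - (ν : ℝ)⁻¹ :=
  sub_pos.2 (inv_lt_one_of_one_lt₀ (Nat.one_lt_cast.2 hν))

theorem levelWeight_pos (hν : 1 < ν) (hp0 : 0 ≤ p) (hlam : 0 < lam) (j : ℕ) :
    0 < levelWeight ν p lam j := by
  have := one_sub_inv_pos hν
  have : 0 < lam + p ^ j := by positivity
  unfold levelWeight
  positivity

theorem levelWeight_le (hν : 1 < ν) (hp0 : 0 ≤ p) (hlam : 0 < lam) (j : ℕ) :
    levelWeight ν p lam j ≤ (1 - (ν : ℝ)⁻¹) * lam⁻¹ * ((ν : ℝ)⁻¹) ^ j := by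
  rw [levelWeight, inv_pow, mul_right_comm]
  have := one_sub_inv_pos hν
  gcongr
  exact le_add_of_nonneg_right (pow_nonneg hp0 j)

theorem hasSum_levelWeight_majorant (hν : 1 < ν) (d : ℕ) :
    HasSum (fun k : ℕ => (1 - (ν : ℝ)⁻¹) * lam⁻¹ * ((ν : ℝ)⁻¹) ^ (k + d))
      (lam⁻¹ * ((ν : ℝ) ^ d)⁻¹) := by
  have h1 : (ν : ℝ)⁻¹ < 1 := inv_lt_one_of_one_lt₀ (Nat.one_lt_cast.2 hν)
  set C := (1 - (ν : ℝ)⁻¹) * lam⁻¹ * ((ν : ℝ)⁻¹) ^ d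
  have hterm (k : ℕ) : (1 - (ν : ℝ)⁻¹) * lam⁻¹ * ((ν : ℝ)⁻¹) ^ (k + d)
      = C * ((ν : ℝ)⁻¹) ^ k := by
    rw [pow_add]
    ring
  have hsum : lam⁻¹ * ((ν : ℝ) ^ d)⁻¹ = C * (1 - (ν : ℝ)⁻¹)⁻¹ := by
    rw [mul_right_comm, mul_right_comm (1 - _), mul_inv_cancel₀ (one_sub_inv_pos hν).ne',
      one_mul, inv_pow]
  rw [funext hterm, hsum]
  exact (hasSum_geometric_of_lt_one (by positivity) h1).mul_left C

theorem summable_levelWeight (hν : 1 < ν) (hp0 : 0 ≤ p) (hlam : 0 < lam) (d : ℕ) :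
    Summable fun k : ℕ => levelWeight ν p lam (k + d) :=
  Summable.of_nonneg_of_le (fun _ => (levelWeight_pos hν hp0 hlam _).le)
    (fun _ => levelWeight_le hν hp0 hlam _) (hasSum_levelWeight_majorant hν d).summable

theorem tailSum_pos (hν : 1 < ν) (hp0 : 0 ≤ p) (hlam : 0 < lam) (d : ℕ) :
    0 < tailSum ν p lam d :=
  (summable_levelWeight hν hp0 hlam d).tsum_pos (fun _ => (levelWeight_pos hν hp0 hlam _).le) 0
    (levelWeight_pos hν hp0 hlam _)

theorem tailSum_le (hν : 1 < ν) (hp0 : 0 ≤ p) (hlam : 0 < lam) (d : ℕ) :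
    tailSum ν p lam d ≤ lam⁻¹ * ((ν : ℝ) ^ d)⁻¹ :=
  hasSum_le (fun _ => levelWeight_le hν hp0 hlam _)
    (summable_levelWeight hν hp0 hlam d).hasSum (hasSum_levelWeight_majorant hν d)

theorem tailSum_eq_add_tailSum_succ (hν : 1 < ν) (hp0 : 0 ≤ p) (hlam : 0 < lam) (d : ℕ) :
    tailSum ν p lam d = levelWeight ν p lam d + tailSum ν p lam (d + 1) := by
  rw [tailSum, (summable_levelWeight hν hp0 hlam d).tsum_eq_zero_add, zero_add, tailSum]
  simp only [add_right_comm _ 1 d, add_assoc]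

theorem tendsto_tailSum (hν : 1 < ν) (hp0 : 0 ≤ p) (hlam : 0 < lam) :
    Tendsto (tailSum ν p lam) atTop (𝓝 0) := by
  have hgeom :
      Tendsto (fun d : ℕ => lam⁻¹ * ((ν : ℝ) ^ d)⁻¹) atTop (𝓝 (lam⁻¹ * 0)) := by
    simp_rw [← inv_pow]
    exact (tendsto_pow_atTop_nhds_zero_of_lt_one (by positivity)
      (inv_lt_one_of_one_lt₀ (Nat.one_lt_cast.2 hν))).const_mul _
  rw [mul_zero] at hgeom
  exact squeeze_zero (fun d => (tailSum_pos hν hp0 hlam d).le) (tailSum_le hν hp0 hlam) hgeom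

theorem tailMoment_sub_tailMoment_succ (hν : 1 < ν) (hp0 : 0 ≤ p) (hlam : 0 < lam) (s : ℕ) :
    tailMoment ν p lam s - tailMoment ν p lam (s + 1)
      = (1 - p) * p ^ s * tailSum ν p lam (s + 1) := by
  have hν0 : (ν : ℝ) ≠ 0 := by positivity
  have hlam' : lam + p ^ (s + 1) ≠ 0 := by positivity
  rw [tailMoment, tailMoment, tailSum_eq_add_tailSum_succ hν hp0 hlam (s + 1), levelWeight]
  field_simp
  ring

theorem hasSum_tailMoment (hν : 1 < ν) (hp0 : 0 ≤ p) (hp1 : p < 1) (hlam : 0 < lam) (m : ℕ) :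
    HasSum (fun k : ℕ => (1 - p) * p ^ (k + m) * tailSum ν p lam (k + m + 1))
      (tailMoment ν p lam m) := by
  have hdiff (k : ℕ) := tailMoment_sub_tailMoment_succ hν hp0 hlam (k + m)
  have hanti : Antitone fun k => tailMoment ν p lam (k + m) := by
    refine antitone_nat_of_succ_le fun k => sub_nonneg.1 ?_
    rw [add_right_comm, hdiff]
    exact mul_nonneg (one_sub_mul_pow_nonneg hp0 hp1 _) (tailSum_pos hν hp0 hlam _).le
  have hlim : Tendsto (fun k => tailMoment ν p lam (k + m)) atTop (𝓝 0) := by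
    have h := ((tendsto_const_nhds (x := lam)).add
      (tendsto_pow_atTop_nhds_zero_of_lt_one hp0 hp1)).mul
      ((tendsto_tailSum hν hp0 hlam).comp (tendsto_add_atTop_nat 1)) |>.sub
      (tendsto_inv_atTop_zero.comp ((tendsto_pow_atTop_atTop_of_one_lt
        (Nat.one_lt_cast.2 hν)).comp (tendsto_add_atTop_nat 1)))
    rw [add_zero, mul_zero, sub_zero] at h
    exact h.comp (tendsto_add_atTop_nat m)
  have h := hasSum_sub_succ_of_antitone hanti hlim
  simp only [zero_add, sub_zero, add_right_comm _ 1 m, hdiff] at h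
  exact h

theorem abs_greenProfile_le (hν : 1 < ν) (hp0 : 0 ≤ p) (hlam : 0 < lam) (d : ℕ) :
    |greenProfile ν p lam d| ≤ lam⁻¹ * ((ν : ℝ) ^ d)⁻¹ := by
  cases d with
  | zero =>
    rw [greenProfile, abs_of_pos (tailSum_pos hν hp0 hlam 0)]
    exact tailSum_le hν hp0 hlam 0
  | succ d =>
    refine abs_sub_le_of_nonneg_of_le (tailSum_pos hν hp0 hlam _).le (tailSum_le hν hp0 hlam _)
      (by positivity) ?_
    rw [mul_comm]
    gcongr
    exact le_add_of_nonneg_right (pow_nonneg hp0 d)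

theorem lam_mul_greenProfile_sub (hν : 1 < ν) (hp0 : 0 ≤ p) (hlam : 0 < lam) (d : ℕ) :
    lam * greenProfile ν p lam d
        - (tailMoment ν p lam (d - 1) - p ^ (d - 1) * greenProfile ν p lam d)
      = if d = 0 then 1 else 0 := by
  have hν0 : (ν : ℝ) ≠ 0 := by positivity
  cases d with
  | zero =>
    have : lam + 1 ≠ 0 := by positivity
    rw [if_pos rfl, greenProfile, tailMoment, tailSum_eq_add_tailSum_succ hν hp0 hlam 0,
      levelWeight]
    field_simp
    ring
  | succ m =>
    have : lam + p ^ m ≠ 0 := by positivity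
    rw [if_neg m.succ_ne_zero, Nat.add_sub_cancel, greenProfile, tailMoment]
    field_simp
    ring

end Profile

section Green

variable {ν : ℕ} {p lam : ℝ}

theorem toFinset_cube_zero (x : HX ν) : (cube ν 0 x).toFinset = {x} := by
  ext z
  simp [cube_zero]

theorem sum_cube_inv_sq_le [NeZero ν] (x : HX ν) (s : ℕ) :
    ∑ z ∈ (cube ν s x).toFinset, (((ν : ℝ) ^ hdist x z)⁻¹) ^ 2
      ≤ 2 - ((ν : ℝ) ^ s)⁻¹ := by
  have hν : (0 : ℝ) < ν := Nat.cast_pos.2 (NeZero.pos ν)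
  induction s with
  | zero => norm_num [toFinset_cube_zero]
  | succ s ih =>
    rw [sum_cube_succ_radial x fun d => (((ν : ℝ) ^ d)⁻¹) ^ 2]
    have hstep : ((ν : ℝ) ^ (s + 1) - ν ^ s) * (((ν : ℝ) ^ (s + 1))⁻¹) ^ 2
        ≤ ((ν : ℝ) ^ s)⁻¹ - ((ν : ℝ) ^ (s + 1))⁻¹ := by
      have ha : (0 : ℝ) < (ν : ℝ) ^ s := pow_pos hν s
      rw [pow_succ]
      field_simp
      nlinarith [sq_nonneg ((ν : ℝ) - 1)]
    linarith

theorem sum_cube_greenProfile (hν : 1 < ν) (hp0 : 0 ≤ p) (hlam : 0 < lam) (x : HX ν)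
    (s : ℕ) :
    ∑ z ∈ (cube ν s x).toFinset, greenProfile ν p lam (hdist x z)
      = (ν : ℝ) ^ s * tailSum ν p lam s := by
  have hν0 : (ν : ℝ) ≠ 0 := by positivity
  induction s with
  | zero => simp [toFinset_cube_zero, greenProfile]
  | succ s ih =>
    have : lam + p ^ s ≠ 0 := by positivity
    rw [sum_cube_succ_radial, ih, greenProfile, tailSum_eq_add_tailSum_succ hν hp0 hlam s,
      levelWeight]
    field_simp
    ring

theorem sum_sq_greenProfile_le (hν : 1 < ν) (hp0 : 0 ≤ p) (hlam : 0 < lam) (x : HX ν)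
    (F : Finset (HX ν)) :
    ∑ y ∈ F, greenProfile ν p lam (hdist x y) ^ 2 ≤ 2 * lam⁻¹ ^ 2 := by
  have : NeZero ν := ⟨by omega⟩
  set S := F.sup (hdist x)
  have hF : F ⊆ (cube ν S x).toFinset := fun y hy =>
    Set.mem_toFinset.2 (mem_cube_iff_hdist_le.2 (Finset.le_sup hy))
  calc ∑ y ∈ F, greenProfile ν p lam (hdist x y) ^ 2
      ≤ ∑ y ∈ (cube ν S x).toFinset, greenProfile ν p lam (hdist x y) ^ 2 :=
        Finset.sum_le_sum_of_subset_of_nonneg hF fun _ _ _ => sq_nonneg _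
    _ ≤ ∑ y ∈ (cube ν S x).toFinset, lam⁻¹ ^ 2 * (((ν : ℝ) ^ hdist x y)⁻¹) ^ 2 := by
        refine Finset.sum_le_sum fun y _ => ?_
        rw [← mul_pow, ← sq_abs]
        exact pow_le_pow_left₀ (abs_nonneg _) (abs_greenProfile_le hν hp0 hlam _) 2
    _ ≤ lam⁻¹ ^ 2 * 2 := by
        rw [← Finset.mul_sum]
        have := sum_cube_inv_sq_le x S
        have : (0 : ℝ) ≤ ((ν : ℝ) ^ S)⁻¹ := by positivity
        gcongr
        linarith
    _ = 2 * lam⁻¹ ^ 2 := mul_comm _ _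

def green (hν : 1 < ν) (hp0 : 0 ≤ p) (hlam : 0 < lam) (x : HX ν) : Hl2 ν :=
  ⟨fun y => greenProfile ν p lam (hdist x y),
    memℓp_two_of_sum_sq_le (sum_sq_greenProfile_le hν hp0 hlam x)⟩

variable (hν : 1 < ν) (hp0 : 0 ≤ p) (hlam : 0 < lam)

theorem green_apply (x y : HX ν) : green hν hp0 hlam x y = greenProfile ν p lam (hdist x y) :=
  rfl

theorem cubeAvg_green_of_lt {s : ℕ} {x y : HX ν} (hs : s < hdist x y) :
    cubeAvg s (green hν hp0 hlam x) y = greenProfile ν p lam (hdist x y) := by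
  have hν0 : (ν : ℝ) ^ s ≠ 0 := by positivity
  rw [cubeAvg, cubeSum_eq_sum]
  simp only [green_apply]
  rw [sum_cube_of_lt_hdist hs, inv_mul_cancel_left₀ hν0]

theorem cubeAvg_green_of_le {s : ℕ} {x y : HX ν} (hs : hdist x y ≤ s) :
    cubeAvg s (green hν hp0 hlam x) y = tailSum ν p lam s := by
  have hν0 : (ν : ℝ) ^ s ≠ 0 := by positivity
  rw [cubeAvg, cubeSum_eq_of_mem (mem_cube_iff_hdist_le.2 hs), cubeSum_eq_sum]
  simp only [green_apply]
  rw [sum_cube_greenProfile hν hp0 hlam, inv_mul_cancel_left₀ hν0]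

theorem hierLap_green_apply (hp1 : p < 1) {Δ : Hl2 ν →L[ℝ] Hl2 ν}
    (hΔ : IsHierLap ν p Δ) (x y : HX ν) :
    Δ (green hν hp0 hlam x) y = tailMoment ν p lam (hdist x y - 1)
      - p ^ (hdist x y - 1) * greenProfile ν p lam (hdist x y) := by
  set d := hdist x y
  set m := d - 1
  rw [hΔ]
  refine HasSum.tsum_eq ((hasSum_nat_add_iff' m).1 ?_)
  have hhead : ∑ i ∈ Finset.range m, (1 - p) * p ^ i * (((ν : ℝ) ^ (i + 1))⁻¹
      * cubeSum ν (i + 1) y (green hν hp0 hlam x) - green hν hp0 hlam x y) = 0 := by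
    refine Finset.sum_eq_zero fun i hi => ?_
    rw [Finset.mem_range] at hi
    rw [← cubeAvg, cubeAvg_green_of_lt hν hp0 hlam (by omega), green_apply, sub_self, mul_zero]
  rw [hhead, sub_zero]
  have htail (k : ℕ) : (1 - p) * p ^ (k + m) * (((ν : ℝ) ^ (k + m + 1))⁻¹
      * cubeSum ν (k + m + 1) y (green hν hp0 hlam x) - green hν hp0 hlam x y)
      = (1 - p) * p ^ (k + m) * tailSum ν p lam (k + m + 1)
        - (1 - p) * p ^ (k + m) * greenProfile ν p lam d := by
    rw [← cubeAvg, cubeAvg_green_of_le hν hp0 hlam (by omega), green_apply, mul_sub]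
  simp only [htail]
  refine (hasSum_tailMoment hν hp0 hp1 hlam m).sub ?_
  have := (hasSum_one_sub_mul_pow hp0 hp1).mul_right (p ^ m * greenProfile ν p lam d)
  simp only [one_mul] at this
  rwa [show (fun k : ℕ => (1 - p) * p ^ (k + m) * greenProfile ν p lam d)
    = fun k : ℕ => (1 - p) * p ^ k * (p ^ m * greenProfile ν p lam d) from
      funext fun k => by ring]

theorem smul_one_sub_hierLap_green (hp1 : p < 1) {Δ : Hl2 ν →L[ℝ] Hl2 ν}
    (hΔ : IsHierLap ν p Δ) (x : HX ν) :
    (lam • (1 : Hl2 ν →L[ℝ] Hl2 ν) - Δ) (green hν hp0 hlam x) = hdelta ν x := by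
  refine lp.ext (funext fun y => ?_)
  rw [sub_apply, lp.coeFn_sub, Pi.sub_apply, smul_apply, one_apply_eq_self, lp.coeFn_smul,
    Pi.smul_apply, smul_eq_mul, green_apply, hierLap_green_apply hν hp0 hlam hp1 hΔ,
    lam_mul_greenProfile_sub hν hp0 hlam, hdelta, lp.single_apply, Pi.single_apply]
  simp only [hdist_eq_zero_iff]

end Green

theorem resolvK_self {ν : ℕ} {p lam : ℝ} (hν : 1 < ν) (hp0 : 0 ≤ p) (hp1 : p < 1)
    (hlam : 0 < lam) {Δ : Hl2 ν →L[ℝ] Hl2 ν} (hΔ : IsHierLap ν p Δ) (x : HX ν) :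
    resolvK ν Δ lam x x = tailSum ν p lam 0 := by
  have : NeZero ν := ⟨by omega⟩
  have hinv : Ring.inverse (lam • (1 : Hl2 ν →L[ℝ] Hl2 ν) - Δ) (hdelta ν x)
      = green hν hp0 hlam x := by
    rw [← smul_one_sub_hierLap_green hν hp0 hlam hp1 hΔ]
    exact DFunLike.congr_fun
      (Ring.inverse_mul_cancel _ (isUnit_smul_one_sub_hierLap hp0 hp1 hΔ hlam)) _
  rw [resolvK, hinv, hdelta, lp.inner_single_right, green_apply, hdist_self, greenProfile]
  simp

section Lattice

variable (ν : ℕ) (p lam : ℝ)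

def latticeTerm (k : ℤ) : ℝ :=
  (1 - (ν : ℝ)⁻¹) * ((ν : ℝ) ^ k)⁻¹ * (lam + p ^ k)⁻¹

def latticeSum : ℝ := ∑' k : ℤ, latticeTerm ν p lam k

variable {ν p lam}

theorem latticeTerm_natCast (n : ℕ) : latticeTerm ν p lam n = levelWeight ν p lam n := by
  simp [latticeTerm, levelWeight]

theorem latticeTerm_neg_succ (hp0 : 0 < p) (hlam : 0 ≤ lam) (n : ℕ) :
    latticeTerm ν p lam (-(n + 1))
      = (1 - (ν : ℝ)⁻¹) * ((ν : ℝ) * p) ^ (n + 1) / (1 + lam * p ^ (n + 1)) := by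
  have : 0 < 1 + lam * p ^ (n + 1) := by positivity
  rw [latticeTerm, zpow_neg, inv_inv, zpow_neg,
    show ((n : ℤ) + 1) = ((n + 1 : ℕ) : ℤ) by push_cast; rfl, zpow_natCast, zpow_natCast]
  field_simp
  ring

theorem latticeSum_mul_left (hν0 : (ν : ℝ) ≠ 0) (hp0 : p ≠ 0) :
    latticeSum ν p (p * lam) = ((ν : ℝ) * p)⁻¹ * latticeSum ν p lam := by
  rw [latticeSum, ← (Equiv.addRight (1 : ℤ)).tsum_eq, latticeSum, ← tsum_mul_left]
  congr 1
  ext k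
  rw [Equiv.coe_addRight, latticeTerm, latticeTerm, zpow_add_one₀ hν0, zpow_add_one₀ hp0,
    show p * lam + p ^ k * p = p * (lam + p ^ k) by ring]
  simp only [mul_inv]
  ring

theorem latticeTerm_neg_succ_le (hν : 1 < ν) (hp0 : 0 < p) (hlam : 0 ≤ lam) (n : ℕ) :
    latticeTerm ν p lam (-(n + 1)) ≤ (1 - (ν : ℝ)⁻¹) * ((ν : ℝ) * p) ^ (n + 1) := by
  have := one_sub_inv_pos hν
  rw [latticeTerm_neg_succ hp0 hlam]
  exact div_le_self (by positivity) (le_add_of_nonneg_right (by positivity))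

theorem latticeTerm_neg_succ_nonneg (hν : 1 < ν) (hp0 : 0 < p) (hlam : 0 ≤ lam) (n : ℕ) :
    0 ≤ latticeTerm ν p lam (-(n + 1)) := by
  have := one_sub_inv_pos hν
  rw [latticeTerm_neg_succ hp0 hlam]
  positivity

theorem sub_latticeTerm_neg_succ_le (hν : 1 < ν) (hp0 : 0 < p) (hlam : 0 ≤ lam) (n : ℕ) :
    (1 - (ν : ℝ)⁻¹) * ((ν : ℝ) * p) ^ (n + 1) - latticeTerm ν p lam (-(n + 1))
      ≤ lam * ((1 - (ν : ℝ)⁻¹) * ((ν : ℝ) * p ^ 2) ^ (n + 1)) := by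
  have := one_sub_inv_pos hν
  set A := (1 - (ν : ℝ)⁻¹) * ((ν : ℝ) * p) ^ (n + 1)
  set t := lam * p ^ (n + 1)
  have ht : 0 ≤ t := by positivity
  have hdiff : A - A / (1 + t) = A * t / (1 + t) := by field_simp; ring
  rw [latticeTerm_neg_succ hp0 hlam, hdiff]
  calc A * t / (1 + t) ≤ A * t := div_le_self (by positivity) (le_add_of_nonneg_right ht)
    _ = _ := by ring

theorem summable_latticeTerm_neg_succ (hν : 1 < ν) (hp0 : 0 < p) (hνp : (ν : ℝ) * p < 1)
    (hlam : 0 ≤ lam) : Summable fun n : ℕ => latticeTerm ν p lam (-(n + 1)) :=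
  Summable.of_nonneg_of_le (latticeTerm_neg_succ_nonneg hν hp0 hlam)
    (latticeTerm_neg_succ_le hν hp0 hlam)
    (hasSum_mul_geometric_succ _ (by positivity) hνp).summable

theorem latticeSum_eq_tailSum_add (hν : 1 < ν) (hp0 : 0 < p) (hνp : (ν : ℝ) * p < 1)
    (hlam : 0 < lam) :
    latticeSum ν p lam = tailSum ν p lam 0 + ∑' n : ℕ, latticeTerm ν p lam (-(n + 1)) := by
  have hnat : HasSum (fun n : ℕ => latticeTerm ν p lam n) (tailSum ν p lam 0) := by
    simpa [latticeTerm_natCast, tailSum] using (summable_levelWeight hν hp0.le hlam 0).hasSum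
  exact (hnat.of_nat_of_neg_add_one
    (summable_latticeTerm_neg_succ hν hp0 hνp hlam.le).hasSum).tsum_eq

theorem latticeSum_pos (hν : 1 < ν) (hp0 : 0 < p) (hνp : (ν : ℝ) * p < 1) (hlam : 0 < lam) :
    0 < latticeSum ν p lam := by
  rw [latticeSum_eq_tailSum_add hν hp0 hνp hlam]
  exact add_pos_of_pos_of_nonneg (tailSum_pos hν hp0.le hlam 0)
    (tsum_nonneg (latticeTerm_neg_succ_nonneg hν hp0 hlam.le))

theorem abs_tailSum_sub_latticeSum_sub_le (hν : 1 < ν) (hp0 : 0 < p) (hνp : (ν : ℝ) * p < 1)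
    (hlam : 0 < lam) :
    |tailSum ν p lam 0 - latticeSum ν p lam - p * (ν - 1) / (p * ν - 1)|
      ≤ (1 - (ν : ℝ)⁻¹) * ((ν : ℝ) * p ^ 2) / (1 - (ν : ℝ) * p ^ 2) * lam := by
  have hν0 : (ν : ℝ) ≠ 0 := by positivity
  have hp1 : p < 1 := by nlinarith [(Nat.one_lt_cast (α := ℝ)).2 hν]
  have hνp2 : (ν : ℝ) * p ^ 2 < 1 := by
    nlinarith [mul_lt_mul_of_pos_left hp1 (by positivity : (0 : ℝ) < ν * p)]
  have hlimit := hasSum_mul_geometric_succ (1 - (ν : ℝ)⁻¹) (by positivity) hνp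
  have herror :=
    (hasSum_mul_geometric_succ (1 - (ν : ℝ)⁻¹) (by positivity) hνp2).mul_left lam
  have hdiff := hlimit.sub (summable_latticeTerm_neg_succ hν hp0 hνp hlam.le).hasSum
  have hc :
      p * (ν - 1) / (p * ν - 1) = -((1 - (ν : ℝ)⁻¹) * ((ν : ℝ) * p) / (1 - ν * p)) := by
    rw [← div_neg, neg_sub, mul_comm (ν : ℝ) p,
      show (1 - (ν : ℝ)⁻¹) * (p * ν) = p * (ν - 1) by field_simp]
  rw [latticeSum_eq_tailSum_add hν hp0 hνp hlam, hc, sub_add_cancel_left, sub_neg_eq_add,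
    neg_add_eq_sub, abs_of_nonneg (hasSum_le (fun n => sub_nonneg.2
      (latticeTerm_neg_succ_le hν hp0 hlam.le n)) hasSum_zero hdiff), mul_comm _ lam]
  exact hasSum_le (sub_latticeTerm_neg_succ_le hν hp0 hlam.le) hdiff herror

end Lattice

section Amplitude

def amplitude (ν : ℕ) (p α z : ℝ) : ℝ := (p ^ z) ^ α * latticeSum ν p (p ^ z)

variable {ν : ℕ} {p α : ℝ}

theorem amplitude_pos (hν : 1 < ν) (hp0 : 0 < p) (hνp : (ν : ℝ) * p < 1) (z : ℝ) :
    0 < amplitude ν p α z :=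
  have hpz : 0 < p ^ z := Real.rpow_pos_of_pos hp0 z
  mul_pos (Real.rpow_pos_of_pos hpz α) (latticeSum_pos hν hp0 hνp hpz)

theorem amplitude_periodic (hν0 : (ν : ℝ) ≠ 0) (hp0 : 0 < p) (hα : p ^ α = ν * p) :
    Function.Periodic (amplitude ν p α) 1 := by
  intro z
  have hpz : 0 < p ^ z := Real.rpow_pos_of_pos hp0 z
  rw [amplitude, amplitude, Real.rpow_add_one hp0.ne', mul_comm _ p,
    Real.mul_rpow hp0.le hpz.le, hα, latticeSum_mul_left hν0 hp0.ne', mul_mul_mul_comm,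
    mul_inv_cancel₀ (mul_ne_zero hν0 hp0.ne'), one_mul]

theorem rpow_neg_mul_amplitude (hp0 : 0 < p) (hp1 : p < 1) {lam : ℝ} (hlam : 0 < lam) :
    lam ^ (-α) * amplitude ν p α (Real.log lam / Real.log p) = latticeSum ν p lam := by
  have hpz : p ^ (Real.log lam / Real.log p) = lam := by
    rw [Real.rpow_def_of_pos hp0, mul_div_cancel₀ _ (Real.log_neg hp0 hp1).ne, Real.exp_log hlam]
  rw [amplitude, hpz, ← mul_assoc, ← Real.rpow_add hlam, neg_add_cancel, Real.rpow_zero,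
    one_mul]

theorem sh_pos (hν : 1 < ν) (hp0 : 0 < p) (hp1 : p < 1) : 0 < sh ν p := by
  have : 0 < Real.log (1 / p) := Real.log_pos (one_lt_one_div hp0 hp1)
  have : 0 < Real.log ν := Real.log_pos (Nat.one_lt_cast.2 hν)
  unfold sh
  positivity

theorem mul_lt_one_of_sh_lt_two (hν : 1 < ν) (hp0 : 0 < p) (hp1 : p < 1) (h : sh ν p < 2) :
    (ν : ℝ) * p < 1 := by
  have hL : 0 < Real.log (1 / p) := Real.log_pos (one_lt_one_div hp0 hp1)
  rw [sh, div_lt_iff₀ hL, mul_lt_mul_iff_right₀ two_pos, one_div, Real.log_inv,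
    lt_neg_iff_add_neg, ← Real.log_mul (by positivity) hp0.ne'] at h
  exact (Real.log_neg_iff (by positivity)).1 h

theorem rpow_one_sub_sh_div_two (hν : 1 < ν) (hp0 : 0 < p) (hp1 : p < 1) :
    p ^ (1 - sh ν p / 2) = ν * p := by
  have hlogp : Real.log p ≠ 0 := (Real.log_neg hp0 hp1).ne
  rw [Real.rpow_def_of_pos hp0, sh, one_div, Real.log_inv,
    show Real.log p * (1 - 2 * Real.log ν / -Real.log p / 2) = Real.log p + Real.log ν by
      field_simp; ring,
    Real.exp_add, Real.exp_log hp0, Real.exp_log (by positivity), mul_comm]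

end Amplitude

end Hierarchical

open Hierarchical

theorem stmt11 (ν : ℕ) (hν : 2 ≤ ν) (p : ℝ) (hp0 : 0 < p) (hp1 : p < 1)
    (hrec : sh ν p < 2)
    (Δ : Hl2 ν →L[ℝ] Hl2 ν) (hΔ : IsHierLap ν p Δ) :
    0 < 1 - sh ν p / 2 ∧ 1 - sh ν p / 2 < 1 ∧
    ∃ u : ℝ → ℝ, (∀ z, 0 < u z) ∧ (∀ z, u (z + 1) = u z) ∧
      ∃ C : ℝ, 0 < C ∧
        ∀ x : HX ν, ∀ lam : ℝ, 0 < lam → lam < 1 →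
          |resolvK ν Δ lam x x -
              lam ^ (-(1 - sh ν p / 2)) * u (Real.log lam / Real.log p) -
              p * (ν - 1) / (p * ν - 1)| ≤ C * lam := by
  have hνp := mul_lt_one_of_sh_lt_two hν hp0 hp1 hrec
  have hνp2 : (ν : ℝ) * p ^ 2 < 1 := by nlinarith
  have := one_sub_inv_pos hν
  refine ⟨by linarith, by linarith [sh_pos hν hp0 hp1], amplitude ν p (1 - sh ν p / 2),
    amplitude_pos hν hp0 hνp,
    amplitude_periodic (by positivity) hp0 (rpow_one_sub_sh_div_two hν hp0 hp1),
    (1 - (ν : ℝ)⁻¹) * (ν * p ^ 2) / (1 - ν * p ^ 2), by positivity,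
    fun x lam hlam _ => ?_⟩
  rw [resolvK_self hν hp0.le hp1 hlam hΔ, rpow_neg_mul_amplitude hp0 hp1 hlam]
  exact abs_tailSum_sub_latticeSum_sub_le hν hp0 hνp hlam
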